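/- Define a_{k,l}(r,n) := Σ_{0 ≤ j ≤ l/2} (-1)^j C(l+k-2-j, l-2j) C(j+k-2, k-2) n^j r^(l-2j) for k ≥ 2, l ≥ 0. Then for each fixed k ≥ 2, the formal power series Σ_{l≥0} a_{k,l}(r,n) X^l equals 1/(1 - rX + nX^2)^(k-1) as formal power series in X over the polynomial ring ℚ[r,n]. -/

import Mathlib

open Finset PowerSeries

/-- The base ring `ℚ[r,n]`: polynomials in two variables `r = X 0` and `n = X 1`. -/
abbrev RN : Type := MvPolynomial (Fin 2) ℚ

/-- `a_{k,l}(r,n) = Σ_{0 ≤ j ≤ l/2} (-1)^j C(l+k-2-j, l-2j) C(j+k-2, k-2) n^j r^(l-2j)`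
as an element of `ℚ[r,n]`. -/
noncomputable def gegenA (k l : ℕ) : RN :=
  ∑ j ∈ Finset.range (l / 2 + 1),
    (-1 : RN) ^ j * (Nat.choose (l + k - 2 - j) (l - 2 * j) : RN) *
      (Nat.choose (j + k - 2) (k - 2) : RN) * (MvPolynomial.X 1) ^ j *
      (MvPolynomial.X 0) ^ (l - 2 * j)


/-!
Put `Y = rX - nX²`, so that `1 - rX + nX² = 1 - Y`. Substituting `Y` into the negative binomial
series `(1 - X)^{-(k-1)} = Σ_i C(k-2+i, k-2) X^i` gives a power series inverse to `(1 - Y)^{k-1}`,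
and expanding `Y^i = X^i (r - nX)^i` binomially shows that its `l`-th coefficient is
`Σ_j (-1)^j C(k-2+l-j, k-2) C(l-j, j) n^j r^(l-2j)`. This agrees with `a_{k,l}` term by term,
since both products of binomial coefficients are the same trinomial coefficient.
-/

/-- Both sides are the trinomial coefficient `(d+e+j)! / (d! e! j!)`. -/
theorem Nat.choose_mul_choose_eq_choose_mul_choose (d e j : ℕ) :
    (d + e + j).choose d * (e + j).choose j = (e + j + d).choose e * (j + d).choose d := by
  rw [Nat.choose_symm_of_eq_add (show d + e + j = d + (e + j) by omega),
    Nat.choose_symm_of_eq_add (show e + j = j + e by omega),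
    Nat.choose_mul (n := d + e + j) (k := e + j) (s := e) (by omega),
    show d + e + j - e = j + d by omega, show e + j - e = j by omega,
    show e + j + d = d + e + j by omega, Nat.choose_symm_add]

namespace PowerSeries

variable {R : Type*} [CommRing R]

theorem coeff_subst_eq_sum_range {a : R⟦X⟧} (ha : constantCoeff a = 0) (f : R⟦X⟧) (l : ℕ) :
    coeff l (f.subst a) = ∑ i ∈ range (l + 1), coeff i f * coeff l (a ^ i) := by
  rw [coeff_subst' (.of_constantCoeff_zero' ha)]
  refine finsum_eq_sum_of_support_subset _ fun i hi => ?_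
  rw [coe_range, Set.mem_Iio, Order.lt_add_one_iff]
  by_contra! hl
  apply Function.mem_support.mp hi
  rw [coeff_of_lt_order l ((mod_cast hl : (l : ℕ∞) < i).trans_le
    (le_order_pow_of_constantCoeff_eq_zero i ha)), smul_zero]

theorem coeff_C_mul_X_add_C_mul_X_sq_pow (a b : R) (i j : ℕ) :
    coeff (i + j) ((C a * X + C b * X ^ 2) ^ i) = i.choose j * a ^ (i - j) * b ^ j := by
  rw [show C a * X + C b * X ^ 2 = X * (C b * X + C a) by ring, mul_pow, add_comm i,
    coeff_X_pow_mul', if_pos (by omega), Nat.add_sub_cancel, add_pow, map_sum]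
  simp_rw [mul_pow, ← map_pow, mul_comm (C _) (X ^ _), mul_assoc, ← Nat.cast_comm,
    ← map_natCast (C (R := R)), ← map_mul, coeff_X_pow_mul', coeff_C]
  rw [sum_eq_single j (fun x _ hx => by grind)
    (fun hj => by rw [mem_range, not_lt] at hj; simp [Nat.choose_eq_zero_of_lt hj])]
  simp only [le_refl, Nat.sub_self, if_true]
  ring

theorem coeff_subst_C_mul_X_add_C_mul_X_sq (a b : R) (c : ℕ → R) (l : ℕ) :
    coeff l ((mk c).subst (C a * X + C b * X ^ 2)) =
      ∑ j ∈ range (l + 1), c (l - j) * (l - j).choose j * a ^ (l - 2 * j) * b ^ j := by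
  rw [coeff_subst_eq_sum_range (by simp), ← sum_range_reflect]
  refine sum_congr rfl fun j hj => ?_
  have hjl : j ≤ l := Nat.lt_succ_iff.mp (mem_range.mp hj)
  have h := coeff_C_mul_X_add_C_mul_X_sq_pow a b (l - j) j
  rw [Nat.sub_add_cancel hjl, show l - j - j = l - 2 * j by omega] at h
  rw [show l + 1 - 1 - j = l - j by omega, coeff_mk, h]
  ring

end PowerSeries

theorem gegenA_eq_coeff_subst (d l : ℕ) :
    gegenA (d + 2) l = coeff l ((mk fun i => ((d + i).choose d : RN)).subst
      (C (MvPolynomial.X 0) * X + C (-MvPolynomial.X 1) * X ^ 2)) := by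
  rw [coeff_subst_C_mul_X_add_C_mul_X_sq, gegenA,
    ← sum_subset (range_subset_range.mpr (by omega : l / 2 + 1 ≤ l + 1))]
  · refine sum_congr rfl fun j hj => ?_
    obtain ⟨e, rfl⟩ : ∃ e, l = e + 2 * j := ⟨l - 2 * j, by grind⟩
    have h := congrArg (Nat.cast (R := RN)) (Nat.choose_mul_choose_eq_choose_mul_choose d e j)
    push_cast at h
    rw [show e + 2 * j + (d + 2) - 2 - j = e + j + d by omega,
      show j + (d + 2) - 2 = j + d by omega, show e + 2 * j - 2 * j = e by omega,
      show e + 2 * j - j = e + j by omega, Nat.add_sub_cancel,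
      show d + (e + j) = d + e + j by omega]
    linear_combination -(-1 : RN) ^ j * MvPolynomial.X 1 ^ j * MvPolynomial.X 0 ^ e * h
  · intro j hj hj'
    rw [mem_range] at hj hj'
    rw [Nat.choose_eq_zero_of_lt (by omega : l - j < j)]
    simp

/-- For each fixed `k ≥ 2`, the formal power series `Σ_{l ≥ 0} a_{k,l}(r,n) X^l` equals
`1/(1 - rX + nX²)^(k-1)` as formal power series in `X` over `ℚ[r,n]`; equivalently, its
product with `(1 - rX + nX²)^(k-1)` is `1`. -/
theorem stmt2 (k : ℕ) (hk : 2 ≤ k) :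
    (PowerSeries.mk fun l => gegenA k l) *
      (1 - PowerSeries.C (R := RN) (MvPolynomial.X 0) * PowerSeries.X
        + PowerSeries.C (R := RN) (MvPolynomial.X 1) * PowerSeries.X ^ 2) ^ (k - 1) = 1 := by
  obtain ⟨d, rfl⟩ : ∃ d, k = d + 2 := ⟨k - 2, by omega⟩
  have hY : HasSubst (C (MvPolynomial.X 0) * X + C (-MvPolynomial.X 1) * X ^ 2 : RN⟦X⟧) :=
    .of_constantCoeff_zero' (by simp)
  have hA : (mk fun l => gegenA (d + 2) l) =
      substAlgHom hY (mk fun i => ((d + i).choose d : RN)) :=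
    ext fun l => by rw [coeff_mk, coe_substAlgHom, gegenA_eq_coeff_subst]
  have hD : 1 - C (MvPolynomial.X 0) * X + C (MvPolynomial.X 1) * X ^ 2 =
      substAlgHom hY (1 - X : RN⟦X⟧) := by
    rw [map_sub, map_one, substAlgHom_X, map_neg]
    ring
  rw [hA, hD, show d + 2 - 1 = d + 1 by omega, ← map_pow, ← map_mul,
    mk_add_choose_mul_one_sub_pow_eq_one, map_one]
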